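/- arXiv:1102.4081 — 4 statements merged into one kernel-verified Lean document; each statement's English description precedes it below -/
import Mathlib

section
/- For any natural number n ≥ 1, Γ((n-1)/2) / (Γ(n/2))^((n-1)/n) ≤ n^((n-1)/n) · 2^(1/n) / (n-1). -/
/-!
Write `t = (n - 1) / n`. Since `t · (n / 2) + (1 - t) · n = (n + 1) / 2`, log-convexity of `Γ`
gives `((n - 1) / 2) Γ((n - 1) / 2) = Γ((n + 1) / 2) ≤ Γ(n / 2) ^ t Γ(n) ^ (1 - t)`, and the bound
`(n - 1)! ≤ (n / 2) ^ (n - 1)` turns `Γ(n) ^ (1 - t)` into `(n / 2) ^ t`.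
-/

open Real Finset Nat

lemma Nat.four_mul_succ_mul_sub_le {i k : ℕ} (hi : i < k) :
    4 * ((i + 1) * (k - i)) ≤ (k + 1) ^ 2 := by
  obtain ⟨j, rfl⟩ := Nat.exists_eq_add_of_lt hi
  rw [show i + j + 1 - i = j + 1 by omega]
  nlinarith [sq_nonneg ((i : ℤ) - j)]

-- Pair the factor `i + 1` of `k !` with `k - i` and apply AM-GM to each pair.
lemma Nat.two_pow_mul_factorial_le (k : ℕ) : 2 ^ k * k ! ≤ (k + 1) ^ k := by
  have hrev : k ! = ∏ i ∈ range k, (k - i) := by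
    rw [← prod_range_add_one_eq_factorial, ← prod_range_reflect]
    exact prod_congr rfl fun i hi => by have := mem_range.1 hi; omega
  have hsq : (2 ^ k * k !) ^ 2 ≤ ((k + 1) ^ k) ^ 2 := calc
    (2 ^ k * k !) ^ 2 = ∏ i ∈ range k, 4 * ((i + 1) * (k - i)) := by
      rw [prod_mul_distrib, prod_mul_distrib, prod_range_add_one_eq_factorial, ← hrev,
        prod_const, card_range, mul_pow, ← pow_mul, pow_mul']
      ring
    _ ≤ ∏ _i ∈ range k, (k + 1) ^ 2 :=
      prod_le_prod' fun i hi => four_mul_succ_mul_sub_le (mem_range.1 hi)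
    _ = ((k + 1) ^ k) ^ 2 := by rw [prod_const, card_range, ← pow_mul, ← pow_mul, mul_comm]
  exact (Nat.pow_le_pow_iff_left two_ne_zero).1 hsq

lemma Real.Gamma_natCast_le {n : ℕ} (hn : 1 ≤ n) :
    Gamma n ≤ (n / 2 : ℝ) ^ ((n : ℝ) - 1) := by
  obtain ⟨k, rfl⟩ := Nat.exists_eq_add_of_le' hn
  have hk : (2 : ℝ) ^ k * k ! ≤ (k + 1) ^ k := mod_cast Nat.two_pow_mul_factorial_le k
  push_cast
  rw [Gamma_nat_eq_factorial, add_sub_cancel_right, rpow_natCast, div_pow,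
    le_div_iff₀ (by positivity)]
  linarith

lemma Real.Gamma_add_one_div_two_le {x : ℝ} (hx : 1 < x) :
    Gamma ((x + 1) / 2) ≤ Gamma (x / 2) ^ ((x - 1) / x) * Gamma x ^ (1 / x) := by
  have hx0 : 0 < x := by linarith
  convert Gamma_mul_add_mul_le_rpow_Gamma_mul_rpow_Gamma (half_pos hx0) hx0
    (div_pos (sub_pos.2 hx) hx0) (one_div_pos.2 hx0) (by field_simp; ring) using 2
  field_simp
  ring

lemma Real.two_mul_half_rpow {x t : ℝ} (hx : 0 ≤ x) :
    2 * (x / 2) ^ t = x ^ t * 2 ^ (1 - t) := by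
  rw [div_rpow hx zero_le_two, rpow_sub zero_lt_two, rpow_one]
  field_simp

/-- For any natural number `n ≥ 2`,
`Γ((n-1)/2) / (Γ(n/2))^((n-1)/n) ≤ n^((n-1)/n) · 2^(1/n) / (n-1)`. -/
theorem stmt_0 (n : ℕ) (hn : 2 ≤ n) :
    Real.Gamma (((n : ℝ) - 1) / 2) /
        (Real.Gamma ((n : ℝ) / 2)) ^ (((n : ℝ) - 1) / n) ≤
      (n : ℝ) ^ (((n : ℝ) - 1) / n) * (2 : ℝ) ^ (1 / (n : ℝ)) / ((n : ℝ) - 1) := by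
  have hn' : (2 : ℝ) ≤ n := by exact_mod_cast hn
  have hn0 : (0 : ℝ) < n := by linarith
  set t := ((n : ℝ) - 1) / n
  have hGhalf : 0 < Gamma (n / 2 : ℝ) ^ t := rpow_pos_of_pos (Gamma_pos_of_pos (by positivity)) t
  have hrec : Gamma ((n + 1) / 2 : ℝ) = (n - 1) / 2 * Gamma ((n - 1) / 2) := by
    rw [← Gamma_add_one (by linarith)]; ring_nf
  have hGn : Gamma n ^ (1 / (n : ℝ)) ≤ (n / 2 : ℝ) ^ t := by
    calc Gamma n ^ (1 / (n : ℝ)) ≤ ((n / 2 : ℝ) ^ ((n : ℝ) - 1)) ^ (1 / (n : ℝ)) :=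
          rpow_le_rpow (Gamma_pos_of_pos hn0).le (Gamma_natCast_le (by omega)) (by positivity)
      _ = (n / 2 : ℝ) ^ t := by rw [← rpow_mul (by positivity), mul_one_div]
  have h1t : 1 - t = 1 / n := by simp only [t]; field_simp; ring
  have key := (Gamma_add_one_div_two_le (by linarith : (1 : ℝ) < n)).trans
    (mul_le_mul_of_nonneg_left hGn hGhalf.le)
  rw [hrec] at key
  rw [div_le_div_iff₀ hGhalf (by linarith), ← h1t, ← two_mul_half_rpow hn0.le]
  linarith
end

section
/- Let n ≥ 2, let f: ℝⁿ → ℝ be continuous and nonnegative, let K and L be origin-symmetric convex bodies in ℝⁿ with gauges ‖·‖_K and ‖·‖_L. Then for every x on the unit sphere S^{n-1}: ∫₀^{‖x‖_K^{-1}} t^{n-1} f(tx) dt − ‖x‖_K^{-1}·∫₀^{‖x‖_K^{-1}} t^{n-2} f(tx) dt ≤ ∫₀^{‖x‖_L^{-1}} t^{n-1} f(tx) dt − ‖x‖_K^{-1}·∫₀^{‖x‖_L^{-1}} t^{n-2} f(tx) dt. -/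
open MeasureTheory Metric Set

/-- Pointwise application, along each ray direction `x ∈ S^{n-1}`, of the
elementary inequality of Lemma 2 with `a = ‖x‖_K^{-1}`, `b = ‖x‖_L^{-1}`,
`α(t) = f(tx)`. -/
theorem stmt_8 (n : ℕ) (hn : 2 ≤ n) (f : EuclideanSpace ℝ (Fin n) → ℝ)
    (hf : Continuous f) (hf0 : ∀ x, 0 ≤ f x)
    (K L : Set (EuclideanSpace ℝ (Fin n)))
    (hK : IsCompact K) (hKc : Convex ℝ K) (hKi : (interior K).Nonempty)
    (hKs : ∀ x ∈ K, -x ∈ K)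
    (hL : IsCompact L) (hLc : Convex ℝ L) (hLi : (interior L).Nonempty)
    (hLs : ∀ x ∈ L, -x ∈ L)
    (x : EuclideanSpace ℝ (Fin n)) (hx : ‖x‖ = 1) :
    (∫ t in Ioc (0 : ℝ) (gauge K x)⁻¹, t ^ (n - 1) * f (t • x)) -
        (gauge K x)⁻¹ * ∫ t in Ioc (0 : ℝ) (gauge K x)⁻¹, t ^ (n - 2) * f (t • x) ≤
      (∫ t in Ioc (0 : ℝ) (gauge L x)⁻¹, t ^ (n - 1) * f (t • x)) -
        (gauge K x)⁻¹ * ∫ t in Ioc (0 : ℝ) (gauge L x)⁻¹, t ^ (n - 2) * f (t • x) := by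
  set a : ℝ := (gauge K x)⁻¹ with ha
  set b : ℝ := (gauge L x)⁻¹ with hb
  have ha0 : 0 ≤ a := inv_nonneg.2 (gauge_nonneg _)
  have hb0 : 0 ≤ b := inv_nonneg.2 (gauge_nonneg _)
  set g1 : ℝ → ℝ := fun t => t ^ (n - 1) * f (t • x) with hg1
  set g2 : ℝ → ℝ := fun t => t ^ (n - 2) * f (t • x) with hg2
  have hα : Continuous fun t : ℝ => f (t • x) := hf.comp (continuous_id.smul continuous_const)
  have hc1 : Continuous g1 := (continuous_pow _).mul hα
  have hc2 : Continuous g2 := (continuous_pow _).mul hα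
  have hi1 : ∀ u v : ℝ, IntervalIntegrable g1 volume u v := fun u v => hc1.intervalIntegrable u v
  have hi2 : ∀ u v : ℝ, IntervalIntegrable g2 volume u v := fun u v => hc2.intervalIntegrable u v
  have e1 : ∀ c : ℝ, 0 ≤ c → (∫ t in Ioc (0:ℝ) c, g1 t) = ∫ t in (0:ℝ)..c, g1 t :=
    fun c hc => (intervalIntegral.integral_of_le hc).symm
  have e2 : ∀ c : ℝ, 0 ≤ c → (∫ t in Ioc (0:ℝ) c, g2 t) = ∫ t in (0:ℝ)..c, g2 t :=
    fun c hc => (intervalIntegral.integral_of_le hc).symm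
  rw [show (∫ t in Ioc (0:ℝ) a, t ^ (n-1) * f (t • x)) = ∫ t in (0:ℝ)..a, g1 t from e1 a ha0,
      show (∫ t in Ioc (0:ℝ) b, t ^ (n-1) * f (t • x)) = ∫ t in (0:ℝ)..b, g1 t from e1 b hb0,
      show (∫ t in Ioc (0:ℝ) a, t ^ (n-2) * f (t • x)) = ∫ t in (0:ℝ)..a, g2 t from e2 a ha0,
      show (∫ t in Ioc (0:ℝ) b, t ^ (n-2) * f (t • x)) = ∫ t in (0:ℝ)..b, g2 t from e2 b hb0]
  have hsub1 : (∫ t in (0:ℝ)..b, g1 t) - (∫ t in (0:ℝ)..a, g1 t) = ∫ t in a..b, g1 t :=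
    intervalIntegral.integral_interval_sub_left (hi1 0 b) (hi1 0 a)
  have hsub2 : (∫ t in (0:ℝ)..b, g2 t) - (∫ t in (0:ℝ)..a, g2 t) = ∫ t in a..b, g2 t :=
    intervalIntegral.integral_interval_sub_left (hi2 0 b) (hi2 0 a)
  have key : a * ∫ t in a..b, g2 t ≤ ∫ t in a..b, g1 t := by
    rw [← intervalIntegral.integral_const_mul]
    have hpow : ∀ t : ℝ, t ^ (n - 1) = t ^ (n - 2) * t := by
      intro t
      rw [← pow_succ]
      congr 1
      omega
    rcases le_total a b with hab | hba
    · apply intervalIntegral.integral_mono_on hab ((hi2 a b).const_mul a) (hi1 a b)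
      intro t ht
      simp only [hg1, hg2]
      rw [hpow]
      nlinarith [pow_nonneg (le_trans ha0 ht.1) (n - 2), hf0 (t • x), ht.1,
        mul_nonneg (pow_nonneg (le_trans ha0 ht.1) (n - 2)) (hf0 (t • x))]
    · rw [intervalIntegral.integral_symm b a, intervalIntegral.integral_symm b a,
        neg_le_neg_iff]
      apply intervalIntegral.integral_mono_on hba (hi1 b a) ((hi2 b a).const_mul a)
      intro t ht
      simp only [hg1, hg2]
      rw [hpow]
      nlinarith [pow_nonneg (le_trans hb0 ht.1) (n - 2), hf0 (t • x), ht.2,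
        mul_nonneg (pow_nonneg (le_trans hb0 ht.1) (n - 2)) (hf0 (t • x))]
  nlinarith [hsub1, hsub2]
end

section
/- For every integer n ≥ 2, the constant (π·Γ((n−1)/2)/(2π^{(n+1)/2})) · n^{1/n} · (2π^{n/2}/Γ(n/2))^{(n−1)/n} is at most n/(n−1). Equivalently, Γ((n−1)/2)·(2π^{n/2}/Γ(n/2))^{(n−1)/n}·n^{1/n} / (2π^{(n−1)/2}) ≤ n/(n−1). -/
/-!
Using `Γ(x + 1) = x Γ(x)` to shift both Gamma values up by one, the powers of `π` cancel and the
constant becomes `n / (n - 1) · Γ((n + 1) / 2) / Γ((n + 2) / 2) ^ ((n - 1) / n)`. Since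
`(n + 1) / 2` is the convex combination of `1` and `(n + 2) / 2` with weights `1 / n` and
`(n - 1) / n`, log-convexity of `Γ` together with `Γ(1) = 1` bounds the quotient by `1`.
-/

open Real

namespace Real

theorem Gamma_half_add_half_le_rpow {s : ℝ} (hs : 1 < s) :
    Gamma (s / 2 + 1 / 2) ≤ Gamma (s / 2 + 1) ^ ((s - 1) / s) := by
  have hs0 : 0 < s := by linarith
  have hconv := Gamma_mul_add_mul_le_rpow_Gamma_mul_rpow_Gamma one_pos
    (by positivity : 0 < s / 2 + 1) (by positivity : 0 < 1 / s)
    (div_pos (sub_pos.2 hs) hs0) (by field_simp; ring)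
  rwa [Gamma_one, one_rpow, one_mul, show 1 / s * 1 + (s - 1) / s * (s / 2 + 1) = s / 2 + 1 / 2 by
    field_simp; ring] at hconv

theorem pi_mul_Gamma_div_mul_rpow_eq {s : ℝ} (hs : 1 < s) :
    π * Gamma ((s - 1) / 2) / (2 * π ^ ((s + 1) / 2)) *
        (s ^ (1 / s) * (2 * π ^ (s / 2) / Gamma (s / 2)) ^ ((s - 1) / s)) =
      s / (s - 1) * (Gamma (s / 2 + 1 / 2) / Gamma (s / 2 + 1) ^ ((s - 1) / s)) := by
  have hs0 : 0 < s := by linarith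
  have hs1 : 0 < s - 1 := by linarith
  have hΓ : 0 < Gamma (s / 2 + 1) := Gamma_pos_of_pos (by positivity)
  have hΓ_odd : Gamma ((s - 1) / 2) = 2 / (s - 1) * Gamma (s / 2 + 1 / 2) := by
    rw [show s / 2 + 1 / 2 = (s - 1) / 2 + 1 by ring, Gamma_add_one (by positivity)]
    field_simp
  have hΓ_even : 2 * π ^ (s / 2) / Gamma (s / 2) = s * π ^ (s / 2) / Gamma (s / 2 + 1) := by
    rw [Gamma_add_one (by positivity)]
    field_simp
  have hπ : π ^ ((s + 1) / 2) = π * (π ^ (s / 2)) ^ ((s - 1) / s) := by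
    rw [← rpow_mul pi_pos.le, ← rpow_one_add' pi_pos.le (by positivity)]
    congr 1
    field_simp
    ring
  have hs_pow : s ^ (1 / s) * s ^ ((s - 1) / s) = s := by
    rw [← rpow_add hs0, show 1 / s + (s - 1) / s = 1 by field_simp; ring, rpow_one]
  rw [hΓ_odd, hΓ_even, hπ, div_rpow (by positivity) hΓ.le, mul_rpow hs0.le (by positivity)]
  field_simp
  exact hs_pow

end Real

/-- For every integer `n ≥ 2`,
`(π·Γ((n−1)/2)/(2π^{(n+1)/2})) · n^{1/n} · (2π^{n/2}/Γ(n/2))^{(n−1)/n} ≤ n/(n−1)`. -/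
theorem stmt_11 (n : ℕ) (hn : 2 ≤ n) :
    Real.pi * Real.Gamma (((n : ℝ) - 1) / 2) /
        (2 * Real.pi ^ (((n : ℝ) + 1) / 2)) *
      ((n : ℝ) ^ (1 / (n : ℝ)) *
        (2 * Real.pi ^ ((n : ℝ) / 2) / Real.Gamma ((n : ℝ) / 2)) ^
          (((n : ℝ) - 1) / n)) ≤ (n : ℝ) / ((n : ℝ) - 1) := by
  have hn' : (1 : ℝ) < n := by exact_mod_cast hn
  rw [pi_mul_Gamma_div_mul_rpow_eq hn']
  refine mul_le_of_le_one_right (div_nonneg (by positivity) (by linarith)) ?_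
  exact div_le_one_of_le₀ (Gamma_half_add_half_le_rpow hn') (by positivity)
end

section
/- Let K and L be star bodies in ℝⁿ (n ≥ 2) with radial functions ρ_K, ρ_L : S^{n-1} → (0,∞), and let f : ℝⁿ → [0,∞) be continuous. Suppose ∫_{S^{n-1}} ρ_K(x)·(∫₀^{ρ_K(x)} t^{n-2} f(tx) dt) dσ(x) ≤ ∫_{S^{n-1}} ρ_K(x)·(∫₀^{ρ_L(x)} t^{n-2} f(tx) dt) dσ(x) + C for some constant C ≥ 0. Then ∫_{S^{n-1}} (∫₀^{ρ_K(x)} t^{n-1} f(tx) dt) dσ(x) ≤ ∫_{S^{n-1}} (∫₀^{ρ_L(x)} t^{n-1} f(tx) dt) dσ(x) + C. -/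
/-!
Fix a direction `x` and put `a = ρ_K(x)`, `α(t) = f(tx)`. The integrand `(t - a) t^{n-2} α(t)` is
`≤ 0` on `(0, a]` and `≥ 0` beyond, so `c ↦ ∫₀^c (t - a) t^{n-2} α(t) dt` is minimal at `c = a`;
this is the elementary inequality at `b = ρ_L(x)`. Integrating it over the sphere and adding the
hypothesis gives the claim.
-/

open MeasureTheory Metric Set

theorem setIntegral_Ioc_zero_eq_intervalIntegral_max (h : ℝ → ℝ) (c : ℝ) :
    ∫ t in Ioc 0 c, h t = ∫ t in 0..max c 0, h t := by
  rcases le_total c 0 with hc | hc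
  · simp [hc]
  · rw [max_eq_left hc, intervalIntegral.integral_of_le hc]

theorem continuous_setIntegral_Ioc_zero {X : Type*} [TopologicalSpace X] {g : X → ℝ → ℝ}
    (hg : Continuous g.uncurry) {ρ : X → ℝ} (hρ : Continuous ρ) :
    Continuous fun x => ∫ t in Ioc 0 (ρ x), g x t := by
  simp_rw [setIntegral_Ioc_zero_eq_intervalIntegral_max]
  exact intervalIntegral.continuous_parametric_intervalIntegral_of_continuous hg
    (hρ.max continuous_const)

theorem setIntegral_Ioc_zero_le_of_sign_change {h : ℝ → ℝ} (hh : Continuous h) {a : ℝ}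
    (hneg : ∀ t ∈ Icc 0 a, h t ≤ 0) (hpos : ∀ t, 0 ≤ t → a ≤ t → 0 ≤ h t) (b : ℝ) :
    ∫ t in Ioc 0 a, h t ≤ ∫ t in Ioc 0 b, h t := by
  simp only [setIntegral_Ioc_zero_eq_intervalIntegral_max]
  rw [← sub_nonneg, intervalIntegral.integral_interval_sub_left (hh.intervalIntegrable _ _)
    (hh.intervalIntegrable _ _)]
  have hb : 0 ≤ max b 0 := le_max_right b 0
  rcases le_total (max a 0) (max b 0) with hab | hba
  · exact intervalIntegral.integral_nonneg hab fun t ht =>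
      hpos t (le_of_max_le_right ht.1) (le_of_max_le_left ht.1)
  rcases le_total a 0 with ha | ha
  · rw [max_eq_right ha] at hba ⊢
    rw [le_antisymm hba hb, intervalIntegral.integral_same]
  · rw [max_eq_left ha] at hba ⊢
    rw [intervalIntegral.integral_symm, neg_nonneg]
    simpa using intervalIntegral.integral_mono_on hba (hh.intervalIntegrable _ _)
      intervalIntegrable_const fun t ht => hneg t ⟨hb.trans ht.1, ht.2⟩

theorem setIntegral_Ioc_zero_moment_sub_le {m : ℕ} {α : ℝ → ℝ} (hα : Continuous α)
    (hα0 : ∀ t, 0 ≤ α t) (a b : ℝ) :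
    (∫ t in Ioc 0 a, t ^ (m + 1) * α t) - a * ∫ t in Ioc 0 a, t ^ m * α t ≤
      (∫ t in Ioc 0 b, t ^ (m + 1) * α t) - a * ∫ t in Ioc 0 b, t ^ m * α t := by
  have hcombine : ∀ c, (∫ t in Ioc 0 c, t ^ (m + 1) * α t) - a * ∫ t in Ioc 0 c, t ^ m * α t =
      ∫ t in Ioc 0 c, (t - a) * (t ^ m * α t) := fun c => by
    rw [← integral_const_mul, ← integral_sub (by fun_prop : Continuous _).integrableOn_Ioc
      (by fun_prop : Continuous _).integrableOn_Ioc]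
    congr 1 with t
    ring
  rw [hcombine, hcombine]
  refine setIntegral_Ioc_zero_le_of_sign_change (by fun_prop) (fun t ht => ?_)
    (fun t ht hat => ?_) b
  · exact mul_nonpos_of_nonpos_of_nonneg (sub_nonpos.2 ht.2)
      (mul_nonneg (pow_nonneg ht.1 m) (hα0 t))
  · exact mul_nonneg (sub_nonneg.2 hat) (mul_nonneg (pow_nonneg ht m) (hα0 t))

theorem integral_le_add_of_add_le {X : Type*} [MeasurableSpace X] {μ : Measure X}
    {F₁ F₂ G₁ G₂ : X → ℝ} (hF₁ : Integrable F₁ μ) (hF₂ : Integrable F₂ μ)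
    (hG₁ : Integrable G₁ μ) (hG₂ : Integrable G₂ μ) (h : ∀ x, F₁ x + G₂ x ≤ F₂ x + G₁ x)
    {C : ℝ} (hG : ∫ x, G₁ x ∂μ ≤ (∫ x, G₂ x ∂μ) + C) :
    ∫ x, F₁ x ∂μ ≤ (∫ x, F₂ x ∂μ) + C := by
  have : ∫ x, F₁ x + G₂ x ∂μ ≤ ∫ x, F₂ x + G₁ x ∂μ :=
    integral_mono (hF₁.add hG₂) (hF₂.add hG₁) h
  rw [integral_add hF₁ hG₂, integral_add hF₂ hG₁] at this
  linarith

theorem stmt_12_general (n : ℕ) (hn : 2 ≤ n)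
    (ρK ρL : sphere (0 : EuclideanSpace ℝ (Fin n)) 1 → ℝ)
    (hρK : Continuous ρK) (hρL : Continuous ρL)
    (f : EuclideanSpace ℝ (Fin n) → ℝ) (hf : Continuous f) (hf0 : ∀ x, 0 ≤ f x)
    (C : ℝ)
    (hyp : (∫ x : sphere (0 : EuclideanSpace ℝ (Fin n)) 1,
        ρK x * ∫ t in Ioc (0 : ℝ) (ρK x),
          t ^ (n - 2) * f (t • (x : EuclideanSpace ℝ (Fin n))) ∂volume
        ∂(volume.toSphere)) ≤
      (∫ x : sphere (0 : EuclideanSpace ℝ (Fin n)) 1,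
        ρK x * ∫ t in Ioc (0 : ℝ) (ρL x),
          t ^ (n - 2) * f (t • (x : EuclideanSpace ℝ (Fin n))) ∂volume
        ∂(volume.toSphere)) + C) :
    (∫ x : sphere (0 : EuclideanSpace ℝ (Fin n)) 1,
        (∫ t in Ioc (0 : ℝ) (ρK x),
          t ^ (n - 1) * f (t • (x : EuclideanSpace ℝ (Fin n))) ∂volume)
        ∂(volume.toSphere)) ≤
      (∫ x : sphere (0 : EuclideanSpace ℝ (Fin n)) 1,
        (∫ t in Ioc (0 : ℝ) (ρL x),
          t ^ (n - 1) * f (t • (x : EuclideanSpace ℝ (Fin n))) ∂volume)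
        ∂(volume.toSphere)) + C := by
  have hmoment (k : ℕ) {ρ : sphere (0 : EuclideanSpace ℝ (Fin n)) 1 → ℝ} (hρ : Continuous ρ) :
      Continuous fun x : sphere (0 : EuclideanSpace ℝ (Fin n)) 1 =>
        ∫ t in Ioc (0 : ℝ) (ρ x), t ^ k * f (t • (x : EuclideanSpace ℝ (Fin n))) :=
    continuous_setIntegral_Ioc_zero (by fun_prop) hρ
  have hint {g : sphere (0 : EuclideanSpace ℝ (Fin n)) 1 → ℝ} (hg : Continuous g) :
      Integrable g volume.toSphere :=
    hg.integrable_of_hasCompactSupport (.of_compactSpace g)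
  rw [show n - 1 = n - 2 + 1 by omega]
  refine integral_le_add_of_add_le (hint (hmoment _ hρK)) (hint (hmoment _ hρL))
    (hint (hρK.mul (hmoment _ hρK))) (hint (hρK.mul (hmoment _ hρL))) (fun x => ?_) hyp
  have hx := setIntegral_Ioc_zero_moment_sub_le (m := n - 2)
    (α := fun t => f (t • (x : EuclideanSpace ℝ (Fin n)))) (by fun_prop) (fun _ => hf0 _)
    (ρK x) (ρL x)
  simp only [Pi.mul_apply]
  linarith

/-- Zvavitch's key step for star bodies with radial functions `ρK, ρL` and a
continuous nonnegative density `f`: if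
`∫_{S^{n-1}} ρK(x)·(∫₀^{ρK(x)} t^{n-2} f(tx) dt) dσ ≤
 ∫_{S^{n-1}} ρK(x)·(∫₀^{ρL(x)} t^{n-2} f(tx) dt) dσ + C`, then
`∫_{S^{n-1}} ∫₀^{ρK(x)} t^{n-1} f(tx) dt dσ ≤
 ∫_{S^{n-1}} ∫₀^{ρL(x)} t^{n-1} f(tx) dt dσ + C`. -/
theorem stmt_12 (n : ℕ) (hn : 2 ≤ n)
    (ρK ρL : sphere (0 : EuclideanSpace ℝ (Fin n)) 1 → ℝ)
    (hρK : Continuous ρK) (hρL : Continuous ρL)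
    (hρKpos : ∀ x, 0 < ρK x) (hρLpos : ∀ x, 0 < ρL x)
    (f : EuclideanSpace ℝ (Fin n) → ℝ) (hf : Continuous f) (hf0 : ∀ x, 0 ≤ f x)
    (C : ℝ) (hC : 0 ≤ C)
    (hyp : (∫ x : sphere (0 : EuclideanSpace ℝ (Fin n)) 1,
        ρK x * ∫ t in Ioc (0 : ℝ) (ρK x),
          t ^ (n - 2) * f (t • (x : EuclideanSpace ℝ (Fin n))) ∂volume
        ∂(volume.toSphere)) ≤
      (∫ x : sphere (0 : EuclideanSpace ℝ (Fin n)) 1,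
        ρK x * ∫ t in Ioc (0 : ℝ) (ρL x),
          t ^ (n - 2) * f (t • (x : EuclideanSpace ℝ (Fin n))) ∂volume
        ∂(volume.toSphere)) + C) :
    (∫ x : sphere (0 : EuclideanSpace ℝ (Fin n)) 1,
        (∫ t in Ioc (0 : ℝ) (ρK x),
          t ^ (n - 1) * f (t • (x : EuclideanSpace ℝ (Fin n))) ∂volume)
        ∂(volume.toSphere)) ≤
      (∫ x : sphere (0 : EuclideanSpace ℝ (Fin n)) 1,
        (∫ t in Ioc (0 : ℝ) (ρL x),
          t ^ (n - 1) * f (t • (x : EuclideanSpace ℝ (Fin n))) ∂volume)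
        ∂(volume.toSphere)) + C :=
  stmt_12_general n hn ρK ρL hρK hρL f hf hf0 C hyp
end
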